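/- For every odd integer m ∈ {7, 9, 11} and every odd integer n ≥ m, the lid-chromatic number of the Cartesian product of the cycles C_m and C_n satisfies χ_lid(C_m □ C_n) = 4. -/

import Mathlib

open SimpleGraph

def SimpleGraph.closedNbhd {V : Type*} (G : SimpleGraph V) (v : V) : Set V :=
  insert v (G.neighborSet v)

def SimpleGraph.IsLidColoring {V α : Type*} (G : SimpleGraph V) (f : V → α) : Prop :=
  (∀ ⦃u w⦄, G.Adj u w → f u ≠ f w) ∧
  (∀ ⦃u w⦄, G.Adj u w → G.closedNbhd u ≠ G.closedNbhd w →
    f '' G.closedNbhd u ≠ f '' G.closedNbhd w)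

def SimpleGraph.LidColorable {V : Type*} (G : SimpleGraph V) (k : ℕ) : Prop :=
  ∃ f : V → Fin k, G.IsLidColoring f

noncomputable def SimpleGraph.lidChromaticNumber {V : Type*} (G : SimpleGraph V) : ℕ∞ :=
  ⨅ k ∈ {k : ℕ | G.LidColorable k}, (k : ℕ∞)

/-- The tensor (categorical/Kronecker) product of two simple graphs. -/
def SimpleGraph.tensorProd {α β : Type*} (G : SimpleGraph α) (H : SimpleGraph β) :
    SimpleGraph (α × β) where
  Adj x y := G.Adj x.1 y.1 ∧ H.Adj x.2 y.2
  symm := ⟨fun _ _ h => ⟨h.1.symm, h.2.symm⟩⟩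
  loopless := ⟨fun x h => G.loopless.irrefl x.1 h.1⟩

/-!
Lower bound: in `C_m □ C_n` adjacent vertices have distinct closed neighbourhoods. For a
lid-coloring with at most three colors, the color sets of the two ends of an edge both contain
the two end colors and are distinct, so exactly one of them is the whole palette. Hence
"`N[v]` sees every color" is a proper 2-coloring, which an odd `C_m` does not have.

Upper bound: color the torus column by column with the cyclic column word `S₀ S₁ S₂ (A B)^k`.
The lid conditions are local to four consecutive columns, only eight windows of four columns
occur in this word, and for `m ∈ {7, 9, 11}` these are checked by computation.
-/

namespace SimpleGraph

variable {V : Type*} {G : SimpleGraph V}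

theorem LidColorable.lidChromaticNumber_eq {k : ℕ} (h : G.LidColorable k)
    (hmin : ∀ j, G.LidColorable j → k ≤ j) : G.lidChromaticNumber = k :=
  le_antisymm (iInf₂_le_of_le k h le_rfl)
    (le_iInf₂ fun j hj => by exact_mod_cast hmin j hj)

lemma closedNbhd_ne_of_boxProd_adj {α β : Type*} {G : SimpleGraph α} {H : SimpleGraph β}
    (hG : ∀ a, ∃ a', G.Adj a a') (hH : ∀ b, ∃ b', H.Adj b b') {u w : α × β}
    (huw : (G □ H).Adj u w) : (G □ H).closedNbhd u ≠ (G □ H).closedNbhd w := by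
  intro h
  rcases boxProd_adj.mp huw with ⟨ha, hb⟩ | ⟨hb, ha⟩
  · obtain ⟨b', hbb'⟩ := hH u.2
    have hmem : (u.1, b') ∈ (G □ H).closedNbhd w := h ▸ Set.mem_insert_of_mem _
      (boxProd_adj.mpr (Or.inr ⟨hbb', rfl⟩))
    rcases hmem with hmem | hmem
    · exact ha.ne (Prod.ext_iff.mp hmem).1
    · rcases boxProd_adj.mp hmem with ⟨-, hb'⟩ | ⟨-, ha'⟩
      · exact hbb'.ne (hb.trans hb')
      · exact ha.ne ha'.symm
  · obtain ⟨a', haa'⟩ := hG u.1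
    have hmem : (a', u.2) ∈ (G □ H).closedNbhd w := h ▸ Set.mem_insert_of_mem _
      (boxProd_adj.mpr (Or.inl ⟨haa', rfl⟩))
    rcases hmem with hmem | hmem
    · exact hb.ne (Prod.ext_iff.mp hmem).2
    · rcases boxProd_adj.mp hmem with ⟨-, hb'⟩ | ⟨-, ha'⟩
      · exact hb.ne hb'.symm
      · exact haa'.ne (ha.trans ha')

lemma _root_.Set.eq_pair_of_ne_univ {α : Type*} [Fintype α] (hα : Fintype.card α ≤ 3)
    {x y : α} (hxy : x ≠ y) {s : Set α} (hs : {x, y} ⊆ s) (hne : s ≠ Set.univ) :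
    s = {x, y} := by
  have hlt := Set.ncard_lt_card hne
  rw [Nat.card_eq_fintype_card] at hlt
  exact (Set.eq_of_subset_of_ncard_le hs (by rw [Set.ncard_pair hxy]; omega)).symm

lemma pair_subset_image_closedNbhd {α : Type*} (f : V → α) {u w v : V}
    (hu : u ∈ G.closedNbhd v) (hw : w ∈ G.closedNbhd v) : {f u, f w} ⊆ f '' G.closedNbhd v :=
  Set.insert_subset (Set.mem_image_of_mem f hu) (Set.singleton_subset_iff.mpr ⟨w, hw, rfl⟩)

lemma IsLidColoring.colorable_two {α : Type*} [Fintype α] {f : V → α} (hf : G.IsLidColoring f)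
    (hα : Fintype.card α ≤ 3)
    (hN : ∀ ⦃u w⦄, G.Adj u w → G.closedNbhd u ≠ G.closedNbhd w) : G.Colorable 2 := by
  classical
  refine (Coloring.mk (fun v => decide (f '' G.closedNbhd v = Set.univ)) ?_).colorable
  intro u w huw
  have hne := hf.2 huw (hN huw)
  have hu := pair_subset_image_closedNbhd (G := G) f (Set.mem_insert u _)
    (Set.mem_insert_of_mem _ huw)
  have hw := pair_subset_image_closedNbhd (G := G) f (Set.mem_insert_of_mem _ huw.symm)
    (Set.mem_insert w _)
  by_cases hU : f '' G.closedNbhd u = Set.univ <;> by_cases hW : f '' G.closedNbhd w = Set.univ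
  · exact absurd (hU.trans hW.symm) hne
  · simp [hU, hW]
  · simp [hU, hW]
  · exact absurd ((Set.eq_pair_of_ne_univ hα (hf.1 huw) hu hU).trans
      (Set.eq_pair_of_ne_univ hα (hf.1 huw) hw hW).symm) hne

lemma not_colorable_two_boxProd_cycleGraph {β : Type*} (H : SimpleGraph β) (b : β) {m : ℕ}
    (hm : Odd m) (hm3 : 3 ≤ m) : ¬ (cycleGraph m □ H).Colorable 2 := fun h => by
  have h2 := chromaticNumber_le_iff_colorable.mpr (h.of_hom (boxProdLeft (cycleGraph m) H b).toHom)
  rw [chromaticNumber_cycleGraph_of_odd m (by omega) hm] at h2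
  exact absurd h2 (by decide)

lemma four_le_of_lidColorable_boxProd_cycleGraph {m n k : ℕ} (hm : Odd (m + 2))
    (h : (cycleGraph (m + 2) □ cycleGraph (n + 2)).LidColorable k) : 4 ≤ k := by
  obtain ⟨f, hf⟩ := h
  by_contra! hk
  have hcyc : ∀ {p : ℕ} (a : Fin (p + 2)), ∃ a', (cycleGraph (p + 2)).Adj a a' :=
    fun a => ⟨a + 1, cycleGraph_adj.mpr (Or.inr (add_sub_cancel_left a 1))⟩
  exact not_colorable_two_boxProd_cycleGraph _ 0 hm (by obtain ⟨t, ht⟩ := hm; omega)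
    (hf.colorable_two (by rw [Fintype.card_fin]; omega) fun _ _ =>
      closedNbhd_ne_of_boxProd_adj hcyc hcyc)

end SimpleGraph

section Columns

variable {α : Type*} [DecidableEq α] {m : ℕ}

def nbhdColors (L C R : Fin (m + 2) → α) (i : Fin (m + 2)) : Finset α :=
  {C i, C (i - 1), C (i + 1), L i, R i}

/-- The lid conditions on the edge from row `i` to row `i + 1` of column `C` and on the edge from
row `i` of `C` to row `i` of `R`, where `L C R R'` are consecutive columns. -/
def IsLidWindow (L C R R' : Fin (m + 2) → α) : Prop :=
  ∀ i, C i ≠ C (i + 1) ∧ C i ≠ R i ∧ nbhdColors L C R i ≠ nbhdColors L C R (i + 1) ∧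
    nbhdColors L C R i ≠ nbhdColors C R R' i

instance (L C R R' : Fin (m + 2) → α) : Decidable (IsLidWindow L C R R') := by
  unfold IsLidWindow; infer_instance

def IsLidSeam (S₀ S₁ S₂ A B : Fin (m + 2) → α) : Prop :=
  IsLidWindow B S₀ S₁ S₂ ∧ IsLidWindow S₀ S₁ S₂ A ∧ IsLidWindow S₁ S₂ A B ∧
    IsLidWindow S₂ A B A ∧ IsLidWindow B A B A ∧ IsLidWindow A B A B ∧
    IsLidWindow B A B S₀ ∧ IsLidWindow A B S₀ S₁

instance (S₀ S₁ S₂ A B : Fin (m + 2) → α) : Decidable (IsLidSeam S₀ S₁ S₂ A B) := by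
  unfold IsLidSeam; infer_instance

end Columns

def seamColumns {ι : Type*} (S₀ S₁ S₂ A B : ι) (j : ℕ) : ι :=
  if j = 0 then S₀ else if j = 1 then S₁ else if j = 2 then S₂ else if j % 2 = 1 then A else B

lemma Fin.val_add_one_eq_ite {n : ℕ} (i : Fin (n + 1)) :
    (i + 1).val = if i.val = n then 0 else i.val + 1 := by
  simp [Fin.val_add_one, Fin.ext_iff]

lemma Fin.val_sub_one_eq_ite {n : ℕ} (i : Fin (n + 1)) :
    (i - 1).val = if i.val = 0 then n else i.val - 1 := by
  rw [Fin.coe_sub_one]; simp only [Fin.ext_iff, Fin.val_zero]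

lemma isLidWindow_seamColumns {α : Type*} [DecidableEq α] {m n : ℕ}
    {S₀ S₁ S₂ A B : Fin (m + 2) → α} (h : IsLidSeam S₀ S₁ S₂ A B) (hn : Odd n) (hn5 : 5 ≤ n)
    (b : Fin (n + 2)) :
    IsLidWindow (seamColumns S₀ S₁ S₂ A B (b - 1).val) (seamColumns S₀ S₁ S₂ A B b.val)
      (seamColumns S₀ S₁ S₂ A B (b + 1).val) (seamColumns S₀ S₁ S₂ A B (b + 1 + 1).val) := by
  obtain ⟨hB, h₀, h₁, h₂, hBA, hAB, hBS, hAS⟩ := h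
  obtain ⟨t, rfl⟩ := hn
  have hb := b.isLt
  simp only [Fin.val_add_one_eq_ite, Fin.val_sub_one_eq_ite]
  generalize b.val = j at hb ⊢
  have : j = 0 ∨ j = 1 ∨ j = 2 ∨ j = 3 ∨ j = 2 * t + 1 ∨ j = 2 * t + 2 ∨
      (4 ≤ j ∧ j ≤ 2 * t ∧ j % 2 = 0) ∨ (4 ≤ j ∧ j ≤ 2 * t ∧ j % 2 = 1) := by omega
  rcases this with rfl | rfl | rfl | rfl | rfl | rfl | ⟨hj₁, hj₂, hj₃⟩ | ⟨hj₁, hj₂, hj₃⟩ <;>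
    simp (disch := omega) only [seamColumns, if_pos, if_neg, ↓reduceIte] <;> assumption

def periodicColumn {α : Type*} {m : ℕ} (p q : α) (t : Fin 3 → α) : Fin (m + 2) → α :=
  fun i => if h : i.val + 3 < m + 2 then (if Even i.val then p else q)
    else t ⟨i.val + 3 - (m + 2), by omega⟩

lemma isLidSeam_periodicColumn {m : ℕ} (hm : m = 5 ∨ m = 7 ∨ m = 9) :
    IsLidSeam (α := Fin 4) (m := m) (periodicColumn 1 2 ![3, 1, 2])
      (periodicColumn 3 0 ![2, 0, 1]) (periodicColumn 1 2 ![1, 2, 0])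
      (periodicColumn 0 1 ![2, 3, 2]) (periodicColumn 2 3 ![1, 0, 1]) := by
  rcases hm with rfl | rfl | rfl <;> decide

namespace SimpleGraph

variable {m n : ℕ}

lemma cycleGraph_adj_iff_eq_add_one {u v : Fin (n + 2)} :
    (cycleGraph (n + 2)).Adj u v ↔ u = v + 1 ∨ v = u + 1 := by
  rw [cycleGraph_adj, sub_eq_iff_eq_add', sub_eq_iff_eq_add']

lemma closedNbhd_boxProd_cycleGraph (a : Fin (m + 2)) (b : Fin (n + 2)) :
    (cycleGraph (m + 2) □ cycleGraph (n + 2)).closedNbhd (a, b) =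
      {(a, b), (a - 1, b), (a + 1, b), (a, b - 1), (a, b + 1)} := by
  ext ⟨x, y⟩
  simp only [closedNbhd, neighborSet_boxProd, cycleGraph_neighborSet, Set.mem_insert_iff,
    Set.mem_union, Set.mem_prod, Set.mem_singleton_iff, Prod.mk.injEq]
  tauto

lemma image_closedNbhd_boxProd_cycleGraph {α : Type*} [DecidableEq α]
    (c : Fin (n + 2) → Fin (m + 2) → α) (a : Fin (m + 2)) (b : Fin (n + 2)) :
    (fun p => c p.2 p.1) '' (cycleGraph (m + 2) □ cycleGraph (n + 2)).closedNbhd (a, b) =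
      nbhdColors (c (b - 1)) (c b) (c (b + 1)) a := by
  simp only [closedNbhd_boxProd_cycleGraph, nbhdColors, Set.image_insert_eq, Set.image_singleton,
    Finset.coe_insert, Finset.coe_singleton]

lemma isLidColoring_of_isLidWindow {α : Type*} [DecidableEq α]
    (c : Fin (n + 2) → Fin (m + 2) → α)
    (hc : ∀ b, IsLidWindow (c (b - 1)) (c b) (c (b + 1)) (c (b + 1 + 1))) :
    (cycleGraph (m + 2) □ cycleGraph (n + 2)).IsLidColoring fun p => c p.2 p.1 := by
  set G := cycleGraph (m + 2) □ cycleGraph (n + 2)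
  set f : Fin (m + 2) × Fin (n + 2) → α := fun p => c p.2 p.1
  suffices h : ∀ a b,
      (f (a, b) ≠ f (a + 1, b) ∧ f '' G.closedNbhd (a, b) ≠ f '' G.closedNbhd (a + 1, b)) ∧
      (f (a, b) ≠ f (a, b + 1) ∧ f '' G.closedNbhd (a, b) ≠ f '' G.closedNbhd (a, b + 1)) by
    have key : ∀ ⦃u w⦄, G.Adj u w → f u ≠ f w ∧ f '' G.closedNbhd u ≠ f '' G.closedNbhd w := by
      rintro ⟨a, b⟩ ⟨a', b'⟩ huw
      rcases boxProd_adj.mp huw with ⟨ha, rfl : b = b'⟩ | ⟨hb, rfl : a = a'⟩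
      · rcases cycleGraph_adj_iff_eq_add_one.mp ha with rfl | rfl
        · exact (h a' b).1.imp Ne.symm Ne.symm
        · exact (h a b).1
      · rcases cycleGraph_adj_iff_eq_add_one.mp hb with rfl | rfl
        · exact (h a b').2.imp Ne.symm Ne.symm
        · exact (h a b).2
    exact ⟨fun u w huw => (key huw).1, fun u w huw _ => (key huw).2⟩
  intro a b
  obtain ⟨hv, hh, hvN, hhN⟩ := hc b a
  simp only [f, G, image_closedNbhd_boxProd_cycleGraph, add_sub_cancel_right, ne_eq,
    Finset.coe_inj]
  exact ⟨⟨hv, hvN⟩, hh, hhN⟩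

lemma isLidColoring_seamColumns {α : Type*} [DecidableEq α]
    {S₀ S₁ S₂ A B : Fin (m + 2) → α} (h : IsLidSeam S₀ S₁ S₂ A B) (hn : Odd n) (hn5 : 5 ≤ n) :
    (cycleGraph (m + 2) □ cycleGraph (n + 2)).IsLidColoring
      fun p => seamColumns S₀ S₁ S₂ A B p.2.val p.1 :=
  isLidColoring_of_isLidWindow _ (isLidWindow_seamColumns h hn hn5)

end SimpleGraph

/-- For `m ∈ {7, 9, 11}` and every odd `n ≥ m`, `χ_lid(C_m □ C_n) = 4`. -/
theorem lid_stmt_10 (m n : ℕ) (hm : m = 7 ∨ m = 9 ∨ m = 11) (hn : Odd n) (hmn : m ≤ n) :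
    (cycleGraph m □ cycleGraph n).lidChromaticNumber = 4 := by
  obtain ⟨m, rfl⟩ : ∃ m', m = m' + 2 := ⟨m - 2, by omega⟩
  obtain ⟨n, rfl⟩ : ∃ n', n = n' + 2 := ⟨n - 2, by omega⟩
  have hn' : Odd n := (Nat.odd_add.mp hn).mpr even_two
  refine LidColorable.lidChromaticNumber_eq
    ⟨_, isLidColoring_seamColumns (isLidSeam_periodicColumn (m := m) (by omega)) hn'
      (by omega)⟩
    fun k hk => four_le_of_lidColorable_boxProd_cycleGraph (Nat.odd_iff.mpr (by omega)) hk
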